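/- Let V be a finite-dimensional vector space with a nondegenerate skew-symmetric bilinear form ω over an algebraically closed field of characteristic 0, and let f ∈ sp(V,ω) be nilpotent. Then for every odd m, the number of Jordan blocks of f of size m is even. -/

import Mathlib

/-!
For even `k`, the operator `f ^ k` is self-adjoint for `ω`, since `f` is skew-adjoint. Hence
`(v, w) ↦ ω (f ^ k v) w` is again a skew form; its radical is `ker (f ^ k)` because `ω` is
nondegenerate, so its rank is `rank (f ^ k)`. A skew form in characteristic zero has even rank:
on a complement of its radical it is nondegenerate, and a skew-symmetric matrix of odd size has
`det A = det Aᵀ = -det A`. For odd `m` both `m - 1` and `m + 1` are even, so the block count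
`rank f^(m-1) + rank f^(m+1) - 2 rank f^m` is even.
-/

open Module LinearMap
open scoped Matrix

/-- The number of Jordan blocks of size m of a nilpotent endomorphism f, computed from the
standard rank formula: #blocks of size m = rank f^(m-1) − 2 rank f^m + rank f^(m+1). -/
noncomputable def jordanBlockCount {F V : Type*} [Field F] [AddCommGroup V] [Module F V]
    (f : Module.End F V) (m : ℕ) : ℕ :=
  Module.finrank F (LinearMap.range (f ^ (m - 1)))
    + Module.finrank F (LinearMap.range (f ^ (m + 1)))
    - 2 * Module.finrank F (LinearMap.range (f ^ m))

theorem Matrix.det_eq_zero_of_transpose_eq_neg {n R : Type*} [Fintype n] [DecidableEq n]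
    [CommRing R] [IsAddTorsionFree R] {A : Matrix n n R} (hA : Aᵀ = -A)
    (hn : Odd (Fintype.card n)) : A.det = 0 :=
  self_eq_neg.mp <| calc
    A.det = Aᵀ.det := A.det_transpose.symm
    _ = -A.det := by rw [hA, det_neg, hn.neg_one_pow, neg_one_mul]

namespace LinearMap

lemma IsRefl.nondegenerate_restrict_of_isCompl_ker {R M : Type*} [CommRing R] [AddCommGroup M]
    [Module R M] {B : M →ₗ[R] M →ₗ[R] R} (hB : B.IsRefl) {W : Submodule R M}
    (hW : IsCompl W (ker B)) : (B.domRestrict₁₂ W W).Nondegenerate := by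
  rw [IsRefl.nondegenerate_iff_separatingLeft fun x y ↦ hB (W.subtype x) (W.subtype y)]
  rintro ⟨x, hxW⟩ hx
  suffices x ∈ W ⊓ ker B by simpa [hW.inf_eq_bot] using this
  refine ⟨hxW, ?_⟩
  ext y
  obtain ⟨u, hu, v, hv, rfl⟩ : ∃ u ∈ W, ∃ v ∈ ker B, u + v = y := by
    rw [← Submodule.mem_sup, hW.sup_eq_top]; exact Submodule.mem_top
  have hxv : B x v = 0 := hB v x (by rw [mem_ker.mp hv, zero_apply])
  simpa [hxv, domRestrict₁₂_apply] using hx ⟨u, hu⟩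

theorem IsAdjointPair.pow {R M M₃ : Type*} [CommSemiring R] [AddCommMonoid M] [Module R M]
    [AddCommMonoid M₃] [Module R M₃] {B : M →ₗ[R] M →ₗ[R] M₃} {f g : Module.End R M}
    (h : IsAdjointPair B B f g) (k : ℕ) : IsAdjointPair B B ⇑(f ^ k) ⇑(g ^ k) := by
  induction k with
  | zero => simpa only [pow_zero] using isAdjointPair_one
  | succ k ih =>
    rw [pow_succ, pow_succ']
    exact ih.mul h

end LinearMap

namespace LinearMap.BilinForm

variable {F V : Type*} [Field F] [IsAddTorsionFree F] [AddCommGroup V] [Module F V]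
  [FiniteDimensional F V]

theorem even_finrank_of_skew_of_nondegenerate {B : LinearMap.BilinForm F V}
    (hB : ∀ v w, B v w = -B w v) (hnd : B.Nondegenerate) : Even (finrank F V) := by
  let b := Module.finBasis F V
  by_contra hodd
  refine (nondegenerate_iff_det_ne_zero b).mp hnd (Matrix.det_eq_zero_of_transpose_eq_neg ?_ ?_)
  · ext i j
    simp only [Matrix.transpose_apply, Matrix.neg_apply, toMatrix_apply, hB (b j) (b i)]
  · simpa using Nat.not_even_iff_odd.mp hodd

theorem even_finrank_range_of_skew {B : LinearMap.BilinForm F V} (hB : ∀ v w, B v w = -B w v) :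
    Even (finrank F (range B)) := by
  obtain ⟨W, hW⟩ := (ker B).exists_isCompl
  have hrank : finrank F W = finrank F (range B) := by
    have := Submodule.finrank_add_eq_of_isCompl hW
    have := finrank_range_add_finrank_ker B
    omega
  rw [← hrank]
  refine even_finrank_of_skew_of_nondegenerate (B := B.restrict W) (fun v w ↦ hB v w) ?_
  exact IsRefl.nondegenerate_restrict_of_isCompl_ker (fun v w h ↦ by rw [hB, h, neg_zero]) hW.symm

theorem even_finrank_range_pow_of_isSkewAdjoint {ω : LinearMap.BilinForm F V}
    (hω : ∀ v w, ω v w = -ω w v) (hnd : ω.SeparatingLeft) {f : Module.End F V}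
    (hf : IsSkewAdjoint ω f) {k : ℕ} (hk : Even k) : Even (finrank F (range (f ^ k))) := by
  have hadj : IsAdjointPair ω ω ⇑(f ^ k) ⇑(f ^ k) := by
    simpa only [hk.neg_pow] using IsAdjointPair.pow (g := -f) hf k
  have hrange : finrank F (range (ω ∘ₗ f ^ k)) = finrank F (range (f ^ k)) := by
    rw [range_comp]
    exact (Submodule.equivMapOfInjective ω (ker_eq_bot.mp
      (separatingLeft_iff_ker_eq_bot.mp hnd)) _).finrank_eq.symm
  rw [← hrange]
  exact even_finrank_range_of_skew fun v w ↦ by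
    rw [LinearMap.comp_apply, LinearMap.comp_apply, hadj, hω]

end LinearMap.BilinForm

theorem symplectic_nilpotent_odd_blocks_even_multiplicity_general
    {F : Type*} [Field F] [CharZero F]
    {V : Type*} [AddCommGroup V] [Module F V] [FiniteDimensional F V]
    (ω : LinearMap.BilinForm F V)
    (hskewform : ∀ v w, ω v w = -ω w v)
    (hnd : ∀ v, (∀ w, ω v w = 0) → v = 0)
    (f : Module.End F V)
    (hskew : ∀ v w, ω (f v) w + ω v (f w) = 0) :
    ∀ m : ℕ, 1 ≤ m → Odd m → Even (jordanBlockCount f m) := by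
  intro m _ hm
  have hf : IsSkewAdjoint ω f := fun v w ↦ by
    rw [Pi.neg_apply, map_neg, eq_neg_iff_add_eq_zero]
    exact hskew v w
  obtain ⟨p, hp⟩ :=
    BilinForm.even_finrank_range_pow_of_isSkewAdjoint hskewform hnd hf (Nat.Odd.sub_odd hm odd_one)
  obtain ⟨q, hq⟩ :=
    BilinForm.even_finrank_range_pow_of_isSkewAdjoint hskewform hnd hf hm.add_one
  unfold jordanBlockCount
  exact ⟨p + q - finrank F (range (f ^ m)), by omega⟩

/-- For a nilpotent element f of sp(V,ω) (ω nondegenerate skew-symmetric), every odd Jordan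
block size occurs with even multiplicity. -/
theorem symplectic_nilpotent_odd_blocks_even_multiplicity
    {F : Type*} [Field F] [IsAlgClosed F] [CharZero F]
    {V : Type*} [AddCommGroup V] [Module F V] [FiniteDimensional F V]
    (ω : LinearMap.BilinForm F V)
    (hskewform : ∀ v w, ω v w = -ω w v)
    (hnd : ∀ v, (∀ w, ω v w = 0) → v = 0)
    (f : Module.End F V)
    (hskew : ∀ v w, ω (f v) w + ω v (f w) = 0)
    (hnil : IsNilpotent f) :
    ∀ m : ℕ, 1 ≤ m → Odd m → Even (jordanBlockCount f m) :=
  symplectic_nilpotent_odd_blocks_even_multiplicity_general ω hskewform hnd f hskew
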